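/- Let C_a and C_b be comparator networks on n channels and let π be a permutation of {1,…,n} such that C_a ≤_π C_b, i.e., π(outputs(C_a)) ⊆ outputs(C_b). Then π, viewed as the set of pairs (i, π-image of i), is a perfect matching in the subsumption graph G(C_a,C_b); in other words, for every position i ∈ {1,…,n}, the pair consisting of i and its image under π is an edge of G(C_a,C_b). -/

import Mathlib

/-- Apply a single comparator `c = (i, j)`: the minimum of the two values goes to
channel `i` and the maximum to channel `j`. -/
def applyComp {α : Type*} [LinearOrder α] {n : ℕ} (c : Fin n × Fin n) (x : Fin n → α) :
    Fin n → α :=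
  fun k => if k = c.1 then min (x c.1) (x c.2)
           else if k = c.2 then max (x c.1) (x c.2)
           else x k

/-- Run a comparator network (a list of comparators) on an input sequence. -/
def run {α : Type*} [LinearOrder α] {n : ℕ} (C : List (Fin n × Fin n)) (x : Fin n → α) :
    Fin n → α :=
  C.foldl (fun y c => applyComp c y) x

/-- A standard comparator network: every comparator `(i, j)` has `i < j`. -/
def Standard {n : ℕ} (C : List (Fin n × Fin n)) : Prop := ∀ c ∈ C, c.1 < c.2

/-- The output set of a comparator network on binary sequences. -/
def outputs {n : ℕ} (C : List (Fin n × Fin n)) : Finset (Fin n → Bool) :=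
  Finset.image (run C) Finset.univ

/-- The cluster of outputs having exactly `p` ones. -/
def cluster {n : ℕ} (C : List (Fin n × Fin n)) (p : ℕ) : Finset (Fin n → Bool) :=
  (outputs C).filter (fun x => (Finset.univ.filter (fun i => x i = true)).card = p)

/-- Positions at which some sequence of `cluster C p` has a zero. -/
def zeros {n : ℕ} (C : List (Fin n × Fin n)) (p : ℕ) : Finset (Fin n) :=
  Finset.univ.filter (fun i => ∃ x ∈ cluster C p, x i = false)

/-- Positions at which some sequence of `cluster C p` has a one. -/
def ones {n : ℕ} (C : List (Fin n × Fin n)) (p : ℕ) : Finset (Fin n) :=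
  Finset.univ.filter (fun i => ∃ x ∈ cluster C p, x i = true)

/-- The action of a permutation on a sequence: `π(x) = (x_{π(1)}, …, x_{π(n)})`. -/
def permSeq {n : ℕ} {α : Type*} (π : Equiv.Perm (Fin n)) (x : Fin n → α) : Fin n → α :=
  fun k => x (π k)

/-- `Ca` subsumes `Cb` if some permutation maps `outputs Ca` into `outputs Cb`. -/
def Subsumes {n : ℕ} (Ca Cb : List (Fin n × Fin n)) : Prop :=
  ∃ π : Equiv.Perm (Fin n), (outputs Ca).image (permSeq π) ⊆ outputs Cb

/-- The edge relation of the subsumption graph `G(Ca, Cb)`. -/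
def Edge {n : ℕ} (Ca Cb : List (Fin n × Fin n)) (i j : Fin n) : Prop :=
  (∀ p ≤ n, i ∈ zeros Ca p → j ∈ zeros Cb p) ∧
  (∀ p ≤ n, i ∈ ones Ca p → j ∈ ones Cb p)

lemma card_permSeq {n : ℕ} (π : Equiv.Perm (Fin n)) (x : Fin n → Bool) :
    (Finset.univ.filter (fun i => permSeq π x i = true)).card
      = (Finset.univ.filter (fun i => x i = true)).card := by
  apply Finset.card_bij (fun i _ => π i)
  · intro a ha; simp only [Finset.mem_filter, Finset.mem_univ, true_and] at ha ⊢; simp_all [permSeq]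
  · intro a _ b _ h; exact π.injective h
  · intro b hb
    refine ⟨π.symm b, ?_, by simp⟩
    simp only [Finset.mem_filter, Finset.mem_univ, true_and] at hb ⊢
    simp_all [permSeq]

/-- if `Ca ≤_π Cb`, then `π` is a perfect matching in the subsumption graph
`G(Ca, Cb)`: for every position `i`, the pair of `i` and its image `π⁻¹ i` (position `i`
maps to `j` when `π j = i`) is an edge of the subsumption graph. -/
theorem perm_is_perfect_matching {n : ℕ} (Ca Cb : List (Fin n × Fin n))
    (hCa : Standard Ca) (hCb : Standard Cb) (π : Equiv.Perm (Fin n))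
    (hπ : (outputs Ca).image (permSeq π) ⊆ outputs Cb) :
    ∀ i : Fin n, Edge Ca Cb i (π.symm i) := by
  intro i
  constructor <;>
  · intro p _ hi
    simp only [zeros, ones, Finset.mem_filter, Finset.mem_univ, true_and] at hi ⊢
    obtain ⟨x, hx, hxi⟩ := hi
    refine ⟨permSeq π x, ?_, by simpa [permSeq] using hxi⟩
    simp only [cluster, Finset.mem_filter] at hx ⊢
    exact ⟨hπ (Finset.mem_image_of_mem _ hx.1), by rw [card_permSeq]; exact hx.2⟩
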